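/- The Möbius function of the shuffle poset satisfies μ(W_{m,n}) = (−1)^{m+n} · binom(m+n, n). -/

import Mathlib

/-- Greene's poset of shuffles `W_{m,n}`: fixing the disjoint words
`x = x₁…x_m` (the letters `Sum.inl i`) and `y = y₁…y_n` (the letters `Sum.inr j`),
an element is a shuffle of a subword of `x` with a subword of `y`, i.e. a duplicate-free
list of letters whose `x`-letters appear in increasing order and whose `y`-letters
appear in increasing order. -/
def ShuffleWord (m n : ℕ) :=
  {w : List (Fin m ⊕ Fin n) //
    w.Nodup ∧ (w.filterMap Sum.getLeft?).Pairwise (· < ·) ∧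
      (w.filterMap Sum.getRight?).Pairwise (· < ·)}

/-- The order on `W_{m,n}`: `v ≤ w` iff `v_x ⊇ w_x` and `v_y ⊆ w_y` as sets, and the
restriction of `v` to the letters of `w` equals the restriction of `w` to the letters
of `v` as words. -/
def ShuffleLE {m n : ℕ} (v w : ShuffleWord m n) : Prop :=
  (∀ a : Fin m, Sum.inl a ∈ w.1 → Sum.inl a ∈ v.1) ∧
  (∀ b : Fin n, Sum.inr b ∈ v.1 → Sum.inr b ∈ w.1) ∧
  v.1.filter (fun c => @decide (c ∈ w.1) (Classical.propDecidable _)) =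
    w.1.filter (fun c => @decide (c ∈ v.1) (Classical.propDecidable _))

/-- The rank function `ρ(w) = (m − |w_x|) + |w_y|` of `W_{m,n}`. -/
def shuffleRank {m n : ℕ} (w : ShuffleWord m n) : ℕ :=
  (m - (w.1.filterMap Sum.getLeft?).length) + (w.1.filterMap Sum.getRight?).length

/-! Let `F(v) = (-1)^{ρ(v)} · #{u ≤ v : u contains all of x and the same y-letters as v}`.
Then `∑_{v ≤ w} F(v) = δ(⊥, w)`, so `F = μ(⊥, ·)`. Indeed, exchanging the order of summation,
for a fixed `u` the words `v` with `u ≤ v ≤ w` and `v_y = u_y` are the restrictions of `u` to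
the x-letters of a set `S ⊇ w_x`, and the alternating sum over these `S` vanishes unless `w_x`
is all of `x`. What remains is an alternating sum over the subsets of `w_y`, the possible
`y`-letters of `u`, which vanishes unless `w_y = ∅`, that is, unless `w = ⊥`.
For `w = ⊤` the words counted by `F(⊤)` are those containing every letter: the
`binom(m+n, n)` interleavings of `x` and `y`. -/

open Finset in
theorem eq_of_forall_sum_filter_le_eq {α M : Type*} [PartialOrder α] [Fintype α] [DecidableLE α]
    [AddCancelCommMonoid M] {f g : α → M}
    (h : ∀ w, ∑ v ∈ univ.filter (· ≤ w), f v = ∑ v ∈ univ.filter (· ≤ w), g v) :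
    f = g := by
  classical
  funext w
  induction w using WellFoundedLT.induction with
  | _ w ih =>
    have hw : w ∈ univ.filter (· ≤ w) := by simp
    have hsum := h w
    rw [← add_sum_erase _ _ hw, ← add_sum_erase _ _ hw,
      sum_congr rfl fun v hv => ih v ?_] at hsum
    · exact add_right_cancel hsum
    · obtain ⟨hvw, hv⟩ := mem_erase.1 hv
      exact lt_of_le_of_ne (mem_filter.1 hv).2 hvw

namespace Finset

theorem sum_superset_neg_one_pow_card_compl {α : Type*} [Fintype α] [DecidableEq α]
    (s : Finset α) :
    ∑ t ∈ univ.filter (s ⊆ ·), (-1 : ℤ) ^ #tᶜ = if s = univ then 1 else 0 := by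
  simp_rw [← compl_eq_empty_iff (s := s), ← sum_powerset_neg_one_pow_card]
  refine sum_nbij' compl compl (fun t ht => ?_) (fun t ht => ?_) (fun t _ => compl_compl t)
    (fun t _ => compl_compl t) (fun _ _ => rfl)
  · simpa using (mem_filter.1 ht).2
  · simpa [subset_compl_comm] using ht

end Finset

namespace List

variable {α β : Type*}

theorem mem_filterMap_getLeft? {l : List (α ⊕ β)} {a : α} :
    a ∈ l.filterMap Sum.getLeft? ↔ Sum.inl a ∈ l := by
  simp

theorem mem_filterMap_getRight? {l : List (α ⊕ β)} {b : β} :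
    b ∈ l.filterMap Sum.getRight? ↔ Sum.inr b ∈ l := by
  simp

theorem nodup_of_nodup_filterMap_getLeft?_getRight? :
    ∀ {l : List (α ⊕ β)}, (l.filterMap Sum.getLeft?).Nodup →
      (l.filterMap Sum.getRight?).Nodup → l.Nodup
  | [], _, _ => nodup_nil
  | Sum.inl a :: l, hl, hr => by
    simp only [filterMap_cons, Sum.getLeft?_inl, Sum.getRight?_inl, nodup_cons,
      mem_filterMap_getLeft?] at hl hr
    exact nodup_cons.2 ⟨hl.1, nodup_of_nodup_filterMap_getLeft?_getRight? hl.2 hr⟩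
  | Sum.inr b :: l, hl, hr => by
    simp only [filterMap_cons, Sum.getLeft?_inr, Sum.getRight?_inr, nodup_cons,
      mem_filterMap_getRight?] at hl hr
    exact nodup_cons.2 ⟨hr.1, nodup_of_nodup_filterMap_getLeft?_getRight? hl hr.2⟩

theorem count_false_map_isRight : ∀ l : List (α ⊕ β),
    (l.map Sum.isRight).count false = (l.filterMap Sum.getLeft?).length
  | [] => rfl
  | Sum.inl _ :: l => by simp [count_false_map_isRight l]
  | Sum.inr _ :: l => by simp [filterMap_cons, count_false_map_isRight l]

theorem count_true_map_isRight : ∀ l : List (α ⊕ β),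
    (l.map Sum.isRight).count true = (l.filterMap Sum.getRight?).length
  | [] => rfl
  | Sum.inl _ :: l => by simp [filterMap_cons, count_true_map_isRight l]
  | Sum.inr _ :: l => by simp [count_true_map_isRight l]

theorem ofFn_getD_eq_self {l : List Bool} {k : ℕ} (h : l.length = k) :
    ofFn (fun i : Fin k => l.getD i false) = l := by
  apply ext_getElem <;> simp [h]

def weave : List Bool → List α → List β → List (α ⊕ β)
  | false :: bs, x :: xs, ys => Sum.inl x :: weave bs xs ys
  | true :: bs, xs, y :: ys => Sum.inr y :: weave bs xs ys
  | _, _, _ => []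

theorem weave_map_isRight_filterMap : ∀ l : List (α ⊕ β),
    weave (l.map Sum.isRight) (l.filterMap Sum.getLeft?) (l.filterMap Sum.getRight?) = l
  | [] => rfl
  | Sum.inl a :: l => by simp [weave, filterMap_cons, weave_map_isRight_filterMap l]
  | Sum.inr b :: l => by simp [weave, filterMap_cons, weave_map_isRight_filterMap l]

theorem weave_spec : ∀ {bs : List Bool} {xs : List α} {ys : List β},
    bs.count false = xs.length → bs.count true = ys.length →
      (weave bs xs ys).map Sum.isRight = bs ∧
      (weave bs xs ys).filterMap Sum.getLeft? = xs ∧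
      (weave bs xs ys).filterMap Sum.getRight? = ys
  | [], [], [], _, _ => by simp [weave]
  | false :: bs, x :: xs, ys, hx, hy => by
    have := weave_spec (bs := bs) (xs := xs) (ys := ys) (by simpa using hx) (by simpa using hy)
    simpa [weave, filterMap_cons] using this
  | true :: bs, xs, y :: ys, hx, hy => by
    have := weave_spec (bs := bs) (xs := xs) (ys := ys) (by simpa using hx) (by simpa using hy)
    simpa [weave, filterMap_cons] using this
  | [], _ :: _, _, hx, _ => by simp at hx
  | [], [], _ :: _, _, hy => by simp at hy
  | false :: _, [], _, hx, _ => by simp at hx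
  | true :: _, _, [], _, hy => by simp at hy

end List

namespace ShuffleWord

open List Sum
open scoped Finset Classical

variable {m n : ℕ}

theorem ext {v w : ShuffleWord m n} (h : v.1 = w.1) : v = w := Subtype.ext h

def restrict (w : ShuffleWord m n) (p : Fin m ⊕ Fin n → Bool) : ShuffleWord m n :=
  ⟨w.1.filter p, w.2.1.filter p,
    w.2.2.1.sublist ((filter_sublist (l := w.1)).filterMap _),
    w.2.2.2.sublist ((filter_sublist (l := w.1)).filterMap _)⟩

@[simp] theorem val_restrict (w : ShuffleWord m n) (p : Fin m ⊕ Fin n → Bool) :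
    (restrict w p).1 = w.1.filter p := rfl

theorem mem_restrict {w : ShuffleWord m n} {p : Fin m ⊕ Fin n → Bool} {c : Fin m ⊕ Fin n} :
    c ∈ (restrict w p).1 ↔ c ∈ w.1 ∧ p c := by
  simp

def xLetters (w : ShuffleWord m n) : Finset (Fin m) := (w.1.filterMap getLeft?).toFinset

def yLetters (w : ShuffleWord m n) : Finset (Fin n) := (w.1.filterMap getRight?).toFinset

@[simp] theorem mem_xLetters {w : ShuffleWord m n} {a : Fin m} :
    a ∈ xLetters w ↔ inl a ∈ w.1 := by
  simp [xLetters]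

@[simp] theorem mem_yLetters {w : ShuffleWord m n} {b : Fin n} :
    b ∈ yLetters w ↔ inr b ∈ w.1 := by
  simp [yLetters]

theorem inl_mem_of_xLetters_eq_univ {w : ShuffleWord m n} (hw : xLetters w = .univ) (a : Fin m) :
    inl a ∈ w.1 :=
  mem_xLetters.1 (hw ▸ Finset.mem_univ a)

theorem shuffleRank_eq (w : ShuffleWord m n) :
    shuffleRank w = m - #(xLetters w) + #(yLetters w) := by
  rw [shuffleRank, xLetters, yLetters, toFinset_card_of_nodup w.2.2.1.nodup,
    toFinset_card_of_nodup w.2.2.2.nodup]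

instance : LE (ShuffleWord m n) := ⟨ShuffleLE⟩

theorem le_iff {v w : ShuffleWord m n} :
    v ≤ w ↔ (∀ a, inl a ∈ w.1 → inl a ∈ v.1) ∧ (∀ b, inr b ∈ v.1 → inr b ∈ w.1) ∧
      v.1.filter (fun c => decide (c ∈ w.1)) = w.1.filter (fun c => decide (c ∈ v.1)) :=
  Iff.rfl

theorem xLetters_subset_of_le {v w : ShuffleWord m n} (h : v ≤ w) : xLetters w ⊆ xLetters v :=
  fun a ha => mem_xLetters.2 ((le_iff.1 h).1 a (mem_xLetters.1 ha))

theorem yLetters_subset_of_le {v w : ShuffleWord m n} (h : v ≤ w) : yLetters v ⊆ yLetters w :=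
  fun b hb => mem_yLetters.2 ((le_iff.1 h).2.1 b (mem_yLetters.1 hb))

theorem mem_of_le_of_le {u v w : ShuffleWord m n} (huv : u ≤ v) (hvw : v ≤ w) :
    ∀ c ∈ u.1, c ∈ w.1 → c ∈ v.1
  | inl a, _, ha => (le_iff.1 hvw).1 a ha
  | inr b, hb, _ => (le_iff.1 huv).2.1 b hb

theorem val_eq_filter_of_le_of_subset {v w : ShuffleWord m n} (h : v ≤ w)
    (hvw : ∀ c ∈ v.1, c ∈ w.1) : v.1 = w.1.filter (fun c => decide (c ∈ v.1)) := by
  rw [← (le_iff.1 h).2.2, filter_eq_self.2 (by simpa using hvw)]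

theorem val_eq_filter_of_le_of_superset {v w : ShuffleWord m n} (h : v ≤ w)
    (hwv : ∀ c ∈ w.1, c ∈ v.1) : w.1 = v.1.filter (fun c => decide (c ∈ w.1)) := by
  rw [(le_iff.1 h).2.2, filter_eq_self.2 (by simpa using hwv)]

theorem eq_of_le_of_letters_eq {v w : ShuffleWord m n} (h : v ≤ w)
    (hx : xLetters v = xLetters w) (hy : yLetters v = yLetters w) : v = w := by
  have hmem : ∀ c, c ∈ v.1 ↔ c ∈ w.1
    | inl a => by rw [← mem_xLetters, hx, mem_xLetters]
    | inr b => by rw [← mem_yLetters, hy, mem_yLetters]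
  exact ext ((val_eq_filter_of_le_of_subset h fun c => (hmem c).1).trans
    (filter_eq_self.2 (by simpa using fun c => (hmem c).2)))

instance : PartialOrder (ShuffleWord m n) where
  le_refl _ := le_iff.2 ⟨fun _ h => h, fun _ h => h, rfl⟩
  le_trans u v w huv hvw := by
    obtain ⟨huvx, huvy, huv'⟩ := le_iff.1 huv
    obtain ⟨hvwx, hvwy, hvw'⟩ := le_iff.1 hvw
    refine le_iff.2 ⟨fun a ha => huvx a (hvwx a ha), fun b hb => hvwy b (huvy b hb), ?_⟩
    have hu : u.1.filter (fun c => decide (c ∈ w.1)) =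
        (u.1.filter fun c => decide (c ∈ v.1)).filter fun c => decide (c ∈ w.1) := by
      rw [filter_filter]
      refine filter_congr fun c hc => ?_
      by_cases hcw : c ∈ w.1 <;> simp [hcw, mem_of_le_of_le huv hvw c hc]
    have hw : w.1.filter (fun c => decide (c ∈ u.1)) =
        (w.1.filter fun c => decide (c ∈ v.1)).filter fun c => decide (c ∈ u.1) := by
      rw [filter_filter]
      refine filter_congr fun c hc => ?_
      by_cases hcu : c ∈ u.1
      · simp [hcu, mem_of_le_of_le huv hvw c hcu hc]
      · simp [hcu]
    rw [hu, hw, huv', ← hvw', filter_filter, filter_filter]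
    simp only [Bool.and_comm]
  le_antisymm v w hvw hwv := eq_of_le_of_letters_eq hvw
    ((xLetters_subset_of_le hwv).antisymm (xLetters_subset_of_le hvw))
    ((yLetters_subset_of_le hvw).antisymm (yLetters_subset_of_le hwv))

theorem restrict_le {v w : ShuffleWord m n} {p : Fin m ⊕ Fin n → Bool} (h : v ≤ w)
    (hp : ∀ c ∈ v.1, c ∈ w.1 → p c) : restrict v p ≤ w := by
  obtain ⟨hx, hy, hvw⟩ := le_iff.1 h
  refine le_iff.2 ⟨fun a ha => mem_restrict.2 ⟨hx a ha, hp _ (hx a ha) ha⟩,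
    fun b hb => hy b (mem_restrict.1 hb).1, ?_⟩
  rw [val_restrict, filter_filter, filter_congr fun c hc => ?_, hvw]
  · refine filter_congr fun c hc => ?_
    by_cases hcv : c ∈ v.1
    · simp [hcv, hp c hcv hc]
    · simp [hcv]
  · by_cases hcw : c ∈ w.1 <;> simp [hcw, hp c hc]

theorem le_restrict {v : ShuffleWord m n} {p : Fin m ⊕ Fin n → Bool}
    (hp : ∀ b, inr b ∈ v.1 → p (inr b)) : v ≤ restrict v p := by
  refine le_iff.2 ⟨fun a ha => (mem_restrict.1 ha).1,
    fun b hb => mem_restrict.2 ⟨hb, hp b hb⟩, ?_⟩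
  simp only [val_restrict, mem_filter]
  rw [filter_filter]
  exact filter_congr fun c hc => by simp [hc]

theorem restrict_le_self {w : ShuffleWord m n} {p : Fin m ⊕ Fin n → Bool}
    (hp : ∀ a, inl a ∈ w.1 → p (inl a)) : restrict w p ≤ w := by
  refine le_iff.2 ⟨fun a ha => mem_restrict.2 ⟨ha, hp a ha⟩,
    fun b hb => (mem_restrict.1 hb).1, ?_⟩
  simp only [val_restrict, mem_filter]
  rw [filter_filter]
  exact filter_congr fun c hc => by simp [hc]

def nil : ShuffleWord m n := ⟨[], by simp⟩

def single (c : Fin m ⊕ Fin n) : ShuffleWord m n := ⟨[c], by cases c <;> simp [filterMap_cons]⟩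

theorem xLetters_eq_univ_of_isBot {w : ShuffleWord m n} (h : IsBot w) : xLetters w = .univ :=
  Finset.eq_univ_of_forall fun a =>
    mem_xLetters.2 ((le_iff.1 (h (single (inl a)))).1 a (by simp [single]))

theorem yLetters_eq_empty_of_isBot {w : ShuffleWord m n} (h : IsBot w) : yLetters w = ∅ :=
  Finset.eq_empty_of_forall_notMem fun b hb => by
    simpa [nil] using (le_iff.1 (h nil)).2.1 b (mem_yLetters.1 hb)

theorem xLetters_eq_empty_of_isTop {w : ShuffleWord m n} (h : IsTop w) : xLetters w = ∅ :=
  Finset.eq_empty_of_forall_notMem fun a ha => by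
    simpa [nil] using (le_iff.1 (h nil)).1 a (mem_xLetters.1 ha)

theorem yLetters_eq_univ_of_isTop {w : ShuffleWord m n} (h : IsTop w) : yLetters w = .univ :=
  Finset.eq_univ_of_forall fun b =>
    mem_yLetters.2 ((le_iff.1 (h (single (inr b)))).2.1 b (by simp [single]))

theorem eq_iff_of_isBot {bot w : ShuffleWord m n} (h : IsBot bot) :
    bot = w ↔ xLetters w = .univ ∧ yLetters w = ∅ := by
  refine ⟨?_, fun ⟨hx, hy⟩ => eq_of_le_of_letters_eq (h w) ?_ ?_⟩
  · rintro rfl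
    exact ⟨xLetters_eq_univ_of_isBot h, yLetters_eq_empty_of_isBot h⟩
  · rw [hx, xLetters_eq_univ_of_isBot h]
  · rw [hy, yLetters_eq_empty_of_isBot h]

theorem shuffleRank_of_isTop {w : ShuffleWord m n} (h : IsTop w) : shuffleRank w = m + n := by
  simp [shuffleRank_eq, xLetters_eq_empty_of_isTop h, yLetters_eq_univ_of_isTop h]

theorem filterMap_getLeft?_eq_finRange {u : ShuffleWord m n} (hu : xLetters u = .univ) :
    u.1.filterMap getLeft? = finRange m :=
  u.2.2.1.eq_of_mem_iff (pairwise_lt_finRange m) fun a => by simp [← mem_xLetters, hu]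

theorem filterMap_getRight?_eq_finRange {u : ShuffleWord m n} (hu : yLetters u = .univ) :
    u.1.filterMap getRight? = finRange n :=
  u.2.2.2.eq_of_mem_iff (pairwise_lt_finRange n) fun b => by simp [← mem_yLetters, hu]

theorem length_map_isRight {u : ShuffleWord m n} (hx : xLetters u = .univ)
    (hy : yLetters u = .univ) : (u.1.map isRight).length = m + n := by
  rw [← count_false_add_count_true, count_false_map_isRight, count_true_map_isRight,
    filterMap_getLeft?_eq_finRange hx, filterMap_getRight?_eq_finRange hy, length_finRange,
    length_finRange]

def ofPattern (bs : List Bool) (hx : bs.count false = m) (hy : bs.count true = n) :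
    ShuffleWord m n :=
  ⟨weave bs (finRange m) (finRange n), by
    obtain ⟨-, hl, hr⟩ := weave_spec (xs := finRange m) (ys := finRange n) (by simpa) (by simpa)
    refine ⟨nodup_of_nodup_filterMap_getLeft?_getRight? ?_ ?_, ?_, ?_⟩ <;>
      simp only [hl, hr, nodup_finRange, pairwise_lt_finRange]⟩

theorem map_isRight_ofPattern {bs : List Bool} (hx : bs.count false = m)
    (hy : bs.count true = n) : (ofPattern bs hx hy).1.map isRight = bs :=
  (weave_spec (xs := finRange m) (ys := finRange n) (by simpa) (by simpa)).1

theorem xLetters_ofPattern {bs : List Bool} (hx : bs.count false = m)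
    (hy : bs.count true = n) : xLetters (ofPattern bs hx hy) = .univ := by
  rw [xLetters, ofPattern, (weave_spec (xs := finRange m) (ys := finRange n) (by simpa)
    (by simpa)).2.1, toFinset_finRange]

theorem yLetters_ofPattern {bs : List Bool} (hx : bs.count false = m)
    (hy : bs.count true = n) : yLetters (ofPattern bs hx hy) = .univ := by
  rw [yLetters, ofPattern, (weave_spec (xs := finRange m) (ys := finRange n) (by simpa)
    (by simpa)).2.2, toFinset_finRange]

theorem eq_ofPattern {u : ShuffleWord m n} (hx : xLetters u = .univ) (hy : yLetters u = .univ) :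
    u = ofPattern (u.1.map isRight)
      (by rw [count_false_map_isRight, filterMap_getLeft?_eq_finRange hx, length_finRange])
      (by rw [count_true_map_isRight, filterMap_getRight?_eq_finRange hy, length_finRange]) := by
  refine ext ((weave_map_isRight_filterMap u.1).symm.trans ?_)
  show weave _ _ _ = weave (u.1.map isRight) (finRange m) (finRange n)
  rw [filterMap_getLeft?_eq_finRange hx, filterMap_getRight?_eq_finRange hy]

section Finite

variable [Fintype (ShuffleWord m n)]

open Finset in
theorem sum_neg_one_pow_shuffleRank_between {u w : ShuffleWord m n} (hu : xLetters u = univ)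
    (huw : u ≤ w) :
    ∑ v ∈ univ.filter (fun v => u ≤ v ∧ v ≤ w ∧ yLetters v = yLetters u),
      (-1 : ℤ) ^ shuffleRank v = if xLetters w = univ then (-1) ^ #(yLetters u) else 0 := by
  calc _ = ∑ S ∈ univ.filter (xLetters w ⊆ ·), (-1 : ℤ) ^ #Sᶜ * (-1) ^ #(yLetters u) := by
        refine sum_nbij' xLetters (fun S => restrict u (Sum.elim (· ∈ S) fun _ => true))
          (fun v hv => ?_) (fun S hS => ?_) (fun v hv => ?_) (fun S _ => ?_) (fun v hv => ?_)
        · simpa using xLetters_subset_of_le (Finset.mem_filter.1 hv).2.2.1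
        · refine Finset.mem_filter.2 ⟨mem_univ _, le_restrict fun _ _ => rfl,
            restrict_le huw ?_, by ext b; simp⟩
          rintro (a | b) _ hc
          · simpa using (Finset.mem_filter.1 hS).2 (mem_xLetters.2 hc)
          · rfl
        · obtain ⟨huv, -, hy⟩ := (Finset.mem_filter.1 hv).2
          have hmem_y (b : Fin n) : inr b ∈ v.1 ↔ inr b ∈ u.1 := by
            rw [← mem_yLetters, hy, mem_yLetters]
          have hvu : ∀ c ∈ v.1, c ∈ u.1
            | inl a, _ => inl_mem_of_xLetters_eq_univ hu a
            | inr b, hb => (hmem_y b).1 hb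
          refine ext ((List.filter_congr fun c hc => ?_).trans
            (val_eq_filter_of_le_of_superset huv hvu).symm)
          rcases c with a | b
          · simp
          · simp [(hmem_y b).2 hc]
        · ext a; simp [inl_mem_of_xLetters_eq_univ hu]
        · rw [shuffleRank_eq, (Finset.mem_filter.1 hv).2.2.2, ← pow_add, card_compl,
            Fintype.card_fin]
    _ = _ := by
        rw [← sum_mul, sum_superset_neg_one_pow_card_compl]
        split_ifs <;> simp

open Finset in
theorem sum_neg_one_pow_card_yLetters_of_le {w : ShuffleWord m n} (hw : xLetters w = univ) :
    ∑ u ∈ univ.filter (fun u => u ≤ w ∧ xLetters u = univ), (-1 : ℤ) ^ #(yLetters u) =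
      if yLetters w = ∅ then 1 else 0 := by
  rw [← sum_powerset_neg_one_pow_card]
  refine sum_nbij' yLetters (fun B => restrict w (Sum.elim (fun _ => true) (· ∈ B)))
    (fun u hu => ?_) (fun B hB => ?_) (fun u hu => ?_) (fun B hB => ?_) (fun _ _ => rfl)
  · exact mem_powerset.2 (yLetters_subset_of_le (Finset.mem_filter.1 hu).2.1)
  · refine Finset.mem_filter.2 ⟨mem_univ _, restrict_le_self fun _ _ => rfl, ?_⟩
    ext a; simp [inl_mem_of_xLetters_eq_univ hw]
  · obtain ⟨huw, hu⟩ := (Finset.mem_filter.1 hu).2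
    have huw' : ∀ c ∈ u.1, c ∈ w.1
      | inl a, _ => inl_mem_of_xLetters_eq_univ hw a
      | inr b, hb => (le_iff.1 huw).2.1 b hb
    refine ext ((List.filter_congr fun c hc => ?_).trans
      (val_eq_filter_of_le_of_subset huw huw').symm)
    rcases c with a | b
    · simp [inl_mem_of_xLetters_eq_univ hu]
    · simp
  · ext b
    simpa using fun hb => mem_yLetters.1 (mem_powerset.1 hB hb)

open Finset in
noncomputable def completions (v : ShuffleWord m n) : Finset (ShuffleWord m n) :=
  univ.filter fun u => u ≤ v ∧ xLetters u = univ ∧ yLetters u = yLetters v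

noncomputable def moebiusFormula (v : ShuffleWord m n) : ℤ :=
  (-1) ^ shuffleRank v * #(completions v)

open Finset in
theorem sum_moebiusFormula_le (w : ShuffleWord m n) :
    ∑ v ∈ univ.filter (· ≤ w), moebiusFormula v =
      if xLetters w = univ ∧ yLetters w = ∅ then 1 else 0 := by
  calc _ = ∑ v ∈ univ.filter (· ≤ w), ∑ _u ∈ completions v, (-1 : ℤ) ^ shuffleRank v := by
        simp [moebiusFormula, mul_comm]
    _ = ∑ u ∈ univ.filter (fun u => u ≤ w ∧ xLetters u = univ),
          ∑ v ∈ univ.filter (fun v => u ≤ v ∧ v ≤ w ∧ yLetters v = yLetters u),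
            (-1 : ℤ) ^ shuffleRank v := by
        refine sum_comm' fun v u => ?_
        simp only [completions, Finset.mem_filter, mem_univ, true_and]
        constructor
        · rintro ⟨hvw, huv, hu, hy⟩
          exact ⟨⟨huv, hvw, hy.symm⟩, huv.trans hvw, hu⟩
        · rintro ⟨⟨huv, hvw, hy⟩, -, hu⟩
          exact ⟨hvw, huv, hu, hy.symm⟩
    _ = ∑ u ∈ univ.filter (fun u => u ≤ w ∧ xLetters u = univ),
          if xLetters w = univ then (-1 : ℤ) ^ #(yLetters u) else 0 := by
        refine sum_congr rfl fun u hu => ?_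
        obtain ⟨huw, hu⟩ := (Finset.mem_filter.1 hu).2
        exact sum_neg_one_pow_shuffleRank_between hu huw
    _ = _ := by
        by_cases hw : xLetters w = univ
        · simpa [hw] using sum_neg_one_pow_card_yLetters_of_le hw
        · simp [hw]

theorem completions_of_isTop {w : ShuffleWord m n} (h : IsTop w) :
    completions w = Finset.univ.filter fun u => xLetters u = .univ ∧ yLetters u = .univ := by
  ext u
  simp [completions, h u, yLetters_eq_univ_of_isTop h]

open Finset in
theorem card_filter_xLetters_yLetters_eq_univ :
    #(univ.filter fun u : ShuffleWord m n => xLetters u = univ ∧ yLetters u = univ) =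
      (m + n).choose n := by
  have hcount (s : Finset (Fin (m + n))) : (ofFn fun i => decide (i ∈ s)).count true = #s := by
    rw [count_eq_countP, ofFn_eq_map, countP_map, ← filter_univ_mem s, Fin.univ_def]
    simp [Finset.filter, Finset.card, countP_eq_length_filter, Function.comp_def]
  have hcount' (s : Finset (Fin (m + n))) (hs : #s = n) :
      (ofFn fun i => decide (i ∈ s)).count false = m := by
    have := count_false_add_count_true (ofFn fun i => decide (i ∈ s))
    rw [hcount, hs, length_ofFn] at this
    omega
  rw [← card_fin (m + n), ← card_powersetCard]
  symm
  refine card_bij' (fun s hs => ofPattern (ofFn fun i => decide (i ∈ s))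
      (hcount' s (mem_powersetCard.1 hs).2) ((hcount s).trans (mem_powersetCard.1 hs).2))
    (fun u _ => univ.filter fun i => (u.1.map isRight).getD i false)
    (fun s hs => ?_) (fun u hu => ?_) (fun s hs => ?_) (fun u hu => ?_)
  · simp [xLetters_ofPattern, yLetters_ofPattern]
  · obtain ⟨hx, hy⟩ := (Finset.mem_filter.1 hu).2
    refine mem_powersetCard.2 ⟨subset_univ _, ?_⟩
    simp only [← hcount, Finset.mem_filter_univ, Bool.decide_eq_true]
    rw [ofFn_getD_eq_self (length_map_isRight hx hy), count_true_map_isRight,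
      filterMap_getRight?_eq_finRange hy, length_finRange]
  · ext i
    simp [map_isRight_ofPattern]
  · obtain ⟨hx, hy⟩ := (Finset.mem_filter.1 hu).2
    conv_rhs => rw [eq_ofPattern hx hy]
    refine ext ?_
    simp only [ofPattern, Finset.mem_filter_univ, Bool.decide_eq_true,
      ofFn_getD_eq_self (length_map_isRight hx hy)]

end Finite

end ShuffleWord

open scoped Classical in
/-- The Möbius function of the shuffle poset satisfies
`μ(W_{m,n}) = μ(⊥,⊤) = (−1)^{m+n} binom(m+n,n)`.  Here `mu` is the Möbius function
of `W_{m,n}`, `bot` its bottom element `x` and `top` its top element `y`. -/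
theorem shuffleMoebius (m n : ℕ) [Fintype (ShuffleWord m n)]
    (mu : ShuffleWord m n → ShuffleWord m n → ℤ)
    (hmu : ∀ a b : ShuffleWord m n, ShuffleLE a b →
      (∑ c ∈ Finset.univ.filter (fun c => ShuffleLE a c ∧ ShuffleLE c b), mu a c) =
        if a = b then 1 else 0)
    (bot top : ShuffleWord m n)
    (hbot : ∀ w : ShuffleWord m n, ShuffleLE bot w)
    (htop : ∀ w : ShuffleWord m n, ShuffleLE w top) :
    mu bot top = (-1) ^ (m + n) * ((m + n).choose n : ℤ) := by
  have hmu_eq : mu bot = ShuffleWord.moebiusFormula := by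
    refine eq_of_forall_sum_filter_le_eq fun w => ?_
    calc ∑ v ∈ Finset.univ.filter (· ≤ w), mu bot v = if bot = w then 1 else 0 := by
          rw [← hmu bot w (hbot w)]
          refine Finset.sum_congr ?_ fun _ _ => rfl
          ext c
          simp only [Finset.mem_filter_univ, hbot c, true_and]
          rfl
      _ = ∑ v ∈ Finset.univ.filter (· ≤ w), ShuffleWord.moebiusFormula v := by
          rw [ShuffleWord.sum_moebiusFormula_le]
          exact if_congr (ShuffleWord.eq_iff_of_isBot hbot) rfl rfl
  rw [hmu_eq, ShuffleWord.moebiusFormula, ShuffleWord.completions_of_isTop htop,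
    ShuffleWord.card_filter_xLetters_yLetters_eq_univ, ShuffleWord.shuffleRank_of_isTop htop]
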